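/- Let A be a Banach algebra and B a Banach A-bimodule whose closed unit ball is weakly compact. Suppose (e_α) is a bounded net in A which is a right approximate identity for B (‖π_r(b, e_α) − b‖ → 0 for every b ∈ B), that ê_α → e″ weak* in A** (ê_α the canonical image of e_α), that for every b″ ∈ B** and every net (a″_β) in A** with a″_β → e″ weak* one has π_r***(b″, a″_β) → π_r***(b″, e″) weak* in B**, and that π_r***(b″, ê_α) lies in the canonical image of B in B** for every α and every b″ ∈ B**. Then Z^ℓ_{A**}(B**) = B**, i.e., for every b″ ∈ B** the map a″ ↦ π_r***(b″, a″) is weak*–weak* continuous from A** to B**. -/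

import Mathlib

/-!
A weak* limit `e''` of a right approximate identity acts as a right identity: `π_r**(e'', ·)` is
the identity of `B*`, hence `π_r***(b'', e'') = b''`. The elements `π_r***(b'', ê_α)` are images
of a bounded net in `B`, and by continuity at `e''` they converge weak* to `b''`. Since closed
balls of `B` are weakly compact and `B → B**` is weak–weak* continuous, the image of such a ball
is weak* closed, so `b'' = b̂` for some `b ∈ B`. Finally `π_r***(b̂, a'')` is the functional
`z' ↦ a''(π_r*(z', b))`, which depends weak* continuously on `a''`.
-/

/- Common setup: Arens extensions of bounded bilinear maps between Banach spaces,
weak*–weak* continuity, and related notions. -/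

open NormedSpace ContinuousLinearMap Filter Topology

/-! `NormedSpace.Dual` is no longer in Mathlib (it became `StrongDual`, an `abbrev`); it is
restored here with its old meaning, the continuous dual `E →L[𝕜] 𝕜` with the operator norm. -/

namespace NormedSpace

/-- The topological dual of a normed space `E`. -/
def Dual (𝕜 : Type*) [NontriviallyNormedField 𝕜] (E : Type*) [NormedAddCommGroup E]
    [NormedSpace 𝕜 E] : Type _ :=
  E →L[𝕜] 𝕜

section DualInstances

variable (𝕜 : Type*) [NontriviallyNormedField 𝕜] (E : Type*) [NormedAddCommGroup E]
  [NormedSpace 𝕜 E]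

noncomputable instance : NormedAddCommGroup (Dual 𝕜 E) :=
  ContinuousLinearMap.toNormedAddCommGroup

noncomputable instance : NormedSpace 𝕜 (Dual 𝕜 E) :=
  ContinuousLinearMap.toNormedSpace

instance : FunLike (Dual 𝕜 E) E 𝕜 :=
  ContinuousLinearMap.funLike

instance : ContinuousLinearMapClass (Dual 𝕜 E) 𝕜 E 𝕜 :=
  ContinuousLinearMap.continuousSemilinearMapClass

end DualInstances

/-- The identity map from the dual to the weak dual. -/
noncomputable def Dual.toWeakDual {𝕜 : Type*} [NontriviallyNormedField 𝕜] {E : Type*} [NormedAddCommGroup E]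
    [NormedSpace 𝕜 E] : Dual 𝕜 E ≃ₗ[𝕜] WeakDual 𝕜 E :=
  StrongDual.toWeakDual

end NormedSpace

/-- The identity map from the weak dual to the dual. -/
noncomputable def WeakDual.toNormedDual {𝕜 : Type*} [NontriviallyNormedField 𝕜] {E : Type*}
    [NormedAddCommGroup E] [NormedSpace 𝕜 E] : WeakDual 𝕜 E ≃ₗ[𝕜] NormedSpace.Dual 𝕜 E :=
  WeakDual.toStrongDual

section ArensDefs

variable (𝕜 : Type*) [RCLike 𝕜]
variable {X Y Z : Type*}
  [NormedAddCommGroup X] [NormedSpace 𝕜 X]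
  [NormedAddCommGroup Y] [NormedSpace 𝕜 Y]
  [NormedAddCommGroup Z] [NormedSpace 𝕜 Z]

/-- The first adjoint `m*` of a bounded bilinear map `m : X × Y → Z`, characterized by
`⟨m*(z′,x), y⟩ = ⟨z′, m(x,y)⟩`. -/
noncomputable def arensS (m : X →L[𝕜] Y →L[𝕜] Z) :
    Dual 𝕜 Z →L[𝕜] X →L[𝕜] Dual 𝕜 Y :=
  ((compL 𝕜 X (Y →L[𝕜] Z) (Dual 𝕜 Y)).flip m).comp (compL 𝕜 Y Z 𝕜)

/-- The second adjoint `m**`, characterized by `⟨m**(y″,z′), x⟩ = ⟨y″, m*(z′,x)⟩`. -/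
noncomputable def arensSS (m : X →L[𝕜] Y →L[𝕜] Z) :
    Dual 𝕜 (Dual 𝕜 Y) →L[𝕜] Dual 𝕜 Z →L[𝕜] Dual 𝕜 X :=
  ((compL 𝕜 (Dual 𝕜 Z) (X →L[𝕜] Dual 𝕜 Y) (Dual 𝕜 X)).flip (arensS 𝕜 m)).comp
    (compL 𝕜 X (Dual 𝕜 Y) 𝕜)

/-- The Arens (triple adjoint) extension `m***` of a bounded bilinear map, characterized by
`⟨m***(x″,y″), z′⟩ = ⟨x″, m**(y″,z′)⟩`. -/
noncomputable def arensExt (m : X →L[𝕜] Y →L[𝕜] Z) :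
    Dual 𝕜 (Dual 𝕜 X) →L[𝕜] Dual 𝕜 (Dual 𝕜 Y) →L[𝕜] Dual 𝕜 (Dual 𝕜 Z) :=
  ((compL 𝕜 (Dual 𝕜 (Dual 𝕜 Y)) (Dual 𝕜 Z →L[𝕜] Dual 𝕜 X) (Dual 𝕜 (Dual 𝕜 Z))).flip
      (arensSS 𝕜 m)).comp
    (compL 𝕜 (Dual 𝕜 Z) (Dual 𝕜 X) 𝕜)

end ArensDefs

/-- A map between dual spaces is weak*–weak* continuous if it is continuous with respect to
the weak* topologies on both sides. -/
def IsWeakStarWeakStarContinuous (𝕜 : Type*) [RCLike 𝕜] {E F : Type*}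
    [NormedAddCommGroup E] [NormedSpace 𝕜 E]
    [NormedAddCommGroup F] [NormedSpace 𝕜 F]
    (T : Dual 𝕜 E → Dual 𝕜 F) : Prop :=
  Continuous fun x : WeakDual 𝕜 E =>
    (Dual.toWeakDual (T (WeakDual.toNormedDual x)) : WeakDual 𝕜 F)

section Arens

variable {𝕜 : Type*} [RCLike 𝕜] {X Y Z : Type*}
  [NormedAddCommGroup X] [NormedSpace 𝕜 X]
  [NormedAddCommGroup Y] [NormedSpace 𝕜 Y]
  [NormedAddCommGroup Z] [NormedSpace 𝕜 Z]

theorem arensSS_eq_self_of_tendsto {m : X →L[𝕜] Y →L[𝕜] X} {ι : Type*} {l : Filter ι}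
    [l.NeBot] {e : ι → Y} {e'' : Dual 𝕜 (Dual 𝕜 Y)}
    (hunit : ∀ x, Tendsto (fun i => m x (e i)) l (𝓝 x))
    (hconv : Tendsto
      (fun i => (Dual.toWeakDual (inclusionInDoubleDual 𝕜 Y (e i)) : WeakDual 𝕜 (Dual 𝕜 Y)))
      l (𝓝 (Dual.toWeakDual e'')))
    (z' : Dual 𝕜 X) : arensSS 𝕜 m e'' z' = z' :=
  ContinuousLinearMap.ext fun x =>
    tendsto_nhds_unique (tendsto_iff_forall_eval_tendsto_topDualPairing.1 hconv (arensS 𝕜 m z' x))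
      ((z'.continuous.tendsto x).comp (hunit x))

theorem arensExt_eq_self_of_arensSS_eq_self {m : X →L[𝕜] Y →L[𝕜] X} {e'' : Dual 𝕜 (Dual 𝕜 Y)}
    (he'' : ∀ z', arensSS 𝕜 m e'' z' = z') (x'' : Dual 𝕜 (Dual 𝕜 X)) :
    arensExt 𝕜 m x'' e'' = x'' :=
  ContinuousLinearMap.ext fun z' => congrArg x'' (he'' z')

theorem isWeakStarWeakStarContinuous_arensExt_inclusionInDoubleDual
    (m : X →L[𝕜] Y →L[𝕜] Z) (x : X) :
    IsWeakStarWeakStarContinuous 𝕜 (fun y'' => arensExt 𝕜 m (inclusionInDoubleDual 𝕜 X x) y'') :=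
  WeakDual.continuous_of_continuous_eval fun z' => WeakDual.eval_continuous (arensS 𝕜 m z' x)

end Arens

section WeaklyCompactBall

open scoped Pointwise

variable {𝕜 : Type*} [RCLike 𝕜] {E : Type*} [NormedAddCommGroup E] [NormedSpace 𝕜 E]

theorem isCompact_toWeakSpace_closedBall
    (hball : IsCompact (toWeakSpace 𝕜 E '' Metric.closedBall (0 : E) 1)) (r : ℝ) :
    IsCompact (toWeakSpace 𝕜 E '' Metric.closedBall (0 : E) r) := by
  rcases lt_or_ge r 0 with hr | hr
  · simp [Metric.closedBall_eq_empty.2 hr]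
  · have hball_r : Metric.closedBall (0 : E) r = (r : 𝕜) • Metric.closedBall (0 : E) 1 := by
      rw [smul_unitClosedBall, RCLike.norm_ofReal, abs_of_nonneg hr]
    rw [hball_r, image_smul_set]
    exact hball.smul _

theorem exists_inclusionInDoubleDual_eq_of_tendsto
    (hball : IsCompact (toWeakSpace 𝕜 E '' Metric.closedBall (0 : E) 1))
    {ι : Type*} {l : Filter ι} [l.NeBot] {g : ι → E} {R : ℝ} (hg : ∀ i, ‖g i‖ ≤ R)
    {x'' : Dual 𝕜 (Dual 𝕜 E)}
    (hconv : Tendsto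
      (fun i => (Dual.toWeakDual (inclusionInDoubleDual 𝕜 E (g i)) : WeakDual 𝕜 (Dual 𝕜 E)))
      l (𝓝 (Dual.toWeakDual x''))) :
    ∃ x, inclusionInDoubleDual 𝕜 E x = x'' := by
  have hK : IsCompact (inclusionInDoubleDualWeak 𝕜 E ''
      (toWeakSpace 𝕜 E '' Metric.closedBall (0 : E) R)) :=
    (isCompact_toWeakSpace_closedBall hball R).image (inclusionInDoubleDualWeak 𝕜 E).continuous
  have hmem := hK.isClosed.mem_of_tendsto hconv (Eventually.of_forall fun i =>
    ⟨_, ⟨g i, mem_closedBall_zero_iff.2 (hg i), rfl⟩, rfl⟩)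
  obtain ⟨_, ⟨x, -, rfl⟩, hx⟩ := hmem
  exact ⟨x, Dual.toWeakDual.injective hx⟩

end WeaklyCompactBall

theorem leftTopologicalCenter_eq_of_weaklyCompactBall_of_rightApproxIdentity_general
    {𝕜 : Type*} [RCLike 𝕜]
    {A : Type*} [NonUnitalNormedRing A] [NormedSpace 𝕜 A]
    {B : Type*} [NormedAddCommGroup B] [NormedSpace 𝕜 B]
    (πr : B →L[𝕜] A →L[𝕜] B)
    (hball : IsCompact (toWeakSpace 𝕜 B '' Metric.closedBall (0 : B) 1))
    {ι : Type*} (l : Filter ι) [l.NeBot] (e : ι → A)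
    (hbd : ∃ C : ℝ, ∀ i, ‖e i‖ ≤ C)
    (hRAI : ∀ b : B, Tendsto (fun i => ‖πr b (e i) - b‖) l (𝓝 0))
    (e'' : Dual 𝕜 (Dual 𝕜 A))
    (hconv : Tendsto
      (fun i => (Dual.toWeakDual (inclusionInDoubleDual 𝕜 A (e i)) : WeakDual 𝕜 (Dual 𝕜 A)))
      l (𝓝 (Dual.toWeakDual e'')))
    (hcenter : ∀ b'' : Dual 𝕜 (Dual 𝕜 B),
      ContinuousAt
        (fun a'' : WeakDual 𝕜 (Dual 𝕜 A) =>
          (Dual.toWeakDual (arensExt 𝕜 πr b'' (WeakDual.toNormedDual a'')) :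
            WeakDual 𝕜 (Dual 𝕜 B)))
        (Dual.toWeakDual e''))
    (hrange : ∀ (i : ι) (b'' : Dual 𝕜 (Dual 𝕜 B)), ∃ b : B,
      inclusionInDoubleDual 𝕜 B b = arensExt 𝕜 πr b'' (inclusionInDoubleDual 𝕜 A (e i))) :
    ∀ b'' : Dual 𝕜 (Dual 𝕜 B),
      IsWeakStarWeakStarContinuous 𝕜
        (fun a'' : Dual 𝕜 (Dual 𝕜 A) => arensExt 𝕜 πr b'' a'') := by
  intro b''
  obtain ⟨C, hC⟩ := hbd
  have he'' : arensExt 𝕜 πr b'' e'' = b'' :=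
    arensExt_eq_self_of_arensSS_eq_self
      (arensSS_eq_self_of_tendsto (fun b => tendsto_iff_norm_sub_tendsto_zero.2 (hRAI b)) hconv) b''
  choose g hg using fun i => hrange i b''
  have hg_bdd : ∀ i, ‖g i‖ ≤ ‖arensExt 𝕜 πr b''‖ * C := fun i =>
    calc ‖g i‖ = ‖arensExt 𝕜 πr b'' (inclusionInDoubleDual 𝕜 A (e i))‖ := by
          rw [← hg i]; exact ((inclusionInDoubleDualLi 𝕜).norm_map (g i)).symm
      _ ≤ ‖arensExt 𝕜 πr b''‖ * ‖e i‖ :=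
          ((arensExt 𝕜 πr b'').le_opNorm _).trans (by gcongr; exact double_dual_bound 𝕜 A (e i))
      _ ≤ ‖arensExt 𝕜 πr b''‖ * C := by gcongr; exact hC i
  have hg_tendsto : Tendsto
      (fun i => (Dual.toWeakDual (inclusionInDoubleDual 𝕜 B (g i)) : WeakDual 𝕜 (Dual 𝕜 B))) l
      (𝓝 (Dual.toWeakDual b'')) := by
    have h : Tendsto (fun i => Dual.toWeakDual (arensExt 𝕜 πr b'' (inclusionInDoubleDual 𝕜 A (e i))))
        l (𝓝 (Dual.toWeakDual (arensExt 𝕜 πr b'' e''))) :=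
      (hcenter b'').tendsto.comp hconv
    simpa only [hg, he''] using h
  obtain ⟨b, rfl⟩ := exists_inclusionInDoubleDual_eq_of_tendsto hball hg_bdd hg_tendsto
  exact isWeakStarWeakStarContinuous_arensExt_inclusionInDoubleDual πr b

/-- Let `A` be a Banach algebra and `B` a Banach `A`-bimodule whose closed
unit ball is weakly compact.  Suppose `(e_α)` is a bounded net in `A` which is a right
approximate identity for `B`, `ê_α → e″` weak* in `A**`, for every `b″ ∈ B**` the map
`a″ ↦ π_r***(b″, a″)` is weak*–weak* continuous at `e″` (the locally topological center
condition `Z^ℓ_{e″}(B**) = B**`), and `π_r***(b″, ê_α)` lies in the canonical image of `B`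
in `B**` for every `α, b″`.  Then `Z^ℓ_{A**}(B**) = B**`. -/
theorem leftTopologicalCenter_eq_of_weaklyCompactBall_of_rightApproxIdentity
    {𝕜 : Type*} [RCLike 𝕜]
    {A : Type*} [NonUnitalNormedRing A] [NormedSpace 𝕜 A]
    [IsScalarTower 𝕜 A A] [SMulCommClass 𝕜 A A] [CompleteSpace A]
    {B : Type*} [NormedAddCommGroup B] [NormedSpace 𝕜 B] [CompleteSpace B]
    (πℓ : A →L[𝕜] B →L[𝕜] B) (πr : B →L[𝕜] A →L[𝕜] B)
    (hℓ : ∀ (a₁ a₂ : A) (b : B), πℓ (a₁ * a₂) b = πℓ a₁ (πℓ a₂ b))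
    (hr : ∀ (b : B) (a₁ a₂ : A), πr b (a₁ * a₂) = πr (πr b a₁) a₂)
    (hℓr : ∀ (a₁ : A) (b : B) (a₂ : A), πr (πℓ a₁ b) a₂ = πℓ a₁ (πr b a₂))
    (hball : IsCompact (toWeakSpace 𝕜 B '' Metric.closedBall (0 : B) 1))
    {ι : Type*} (l : Filter ι) [l.NeBot] (e : ι → A)
    (hbd : ∃ C : ℝ, ∀ i, ‖e i‖ ≤ C)
    (hRAI : ∀ b : B, Tendsto (fun i => ‖πr b (e i) - b‖) l (𝓝 0))
    (e'' : Dual 𝕜 (Dual 𝕜 A))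
    (hconv : Tendsto
      (fun i => (Dual.toWeakDual (inclusionInDoubleDual 𝕜 A (e i)) : WeakDual 𝕜 (Dual 𝕜 A)))
      l (𝓝 (Dual.toWeakDual e'')))
    (hcenter : ∀ b'' : Dual 𝕜 (Dual 𝕜 B),
      ContinuousAt
        (fun a'' : WeakDual 𝕜 (Dual 𝕜 A) =>
          (Dual.toWeakDual (arensExt 𝕜 πr b'' (WeakDual.toNormedDual a'')) :
            WeakDual 𝕜 (Dual 𝕜 B)))
        (Dual.toWeakDual e''))
    (hrange : ∀ (i : ι) (b'' : Dual 𝕜 (Dual 𝕜 B)), ∃ b : B,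
      inclusionInDoubleDual 𝕜 B b = arensExt 𝕜 πr b'' (inclusionInDoubleDual 𝕜 A (e i))) :
    ∀ b'' : Dual 𝕜 (Dual 𝕜 B),
      IsWeakStarWeakStarContinuous 𝕜
        (fun a'' : Dual 𝕜 (Dual 𝕜 A) => arensExt 𝕜 πr b'' a'') :=
  leftTopologicalCenter_eq_of_weaklyCompactBall_of_rightApproxIdentity_general πr hball l e hbd hRAI
    e'' hconv hcenter hrange
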